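/- arXiv:1002.3959 — 2 statements merged into one kernel-verified Lean document; each statement's English description precedes it below -/
import Mathlib

section
/- Assume M_θ ≠ ∅. Every continuous unital algebra homomorphism φ : D(M,θ) → ℂ is of the form σ_{x₀,k} for some x₀ ∈ M_θ and some k ∈ ℤ/pℤ; that is, there exist x₀ ∈ M_θ and k ∈ ℤ/pℤ such that φ(a) = Σ_{j∈ℤ/pℤ} ω^{jk} a_{0,j}(x₀) for all a ∈ D(M,θ). -/
/-!
A character `χ` of `D(M,θ)` restricts along the diagonal embedding `f ↦ diag(f ∘ θ^i)` to a
character of `C(M,ℂ)`, hence to evaluation at some point `x₀`. The cyclic shift `U` satisfies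
`U ^ p = 1`, so `χ U = ω ^ k` for some `k`, and the relation `diag(f ∘ θ) * U = U * diag(f)` gives
`f (θ x₀) = f x₀` for every `f`, so `x₀` is fixed by `θ`. Finally every `a ∈ D(M,θ)` is
`∑ⱼ diag(a₀ⱼ) * U ^ j`, and applying `χ` yields `∑ⱼ ω ^ (j k) a₀ⱼ(x₀)`.
-/

open Matrix

/-- `DPred p θ a` says that the matrix `a ∈ M_p(C(M,ℂ))` (indexed by `ℤ/pℤ`) lies in
`D(M,θ)`, i.e. `a_{i+1,j+1} = a_{i,j} ∘ θ`. -/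
def DPred {M : Type*} [TopologicalSpace M] (p : ℕ) (θ : M → M)
    (a : Matrix (ZMod p) (ZMod p) C(M, ℂ)) : Prop :=
  ∀ i j : ZMod p, ∀ x : M, a (i + 1) (j + 1) x = a i j (θ x)

section ShiftMatrix

variable {G R : Type*} [AddGroup G] [DecidableEq G] [Semiring R]

variable (R) in
def shiftMatrix (g : G) : Matrix G G R := of fun i j => if j = i + g then 1 else 0

lemma shiftMatrix_apply (g i j : G) : shiftMatrix R g i j = if j = i + g then 1 else 0 := rfl

lemma shiftMatrix_zero : shiftMatrix R (0 : G) = 1 := by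
  ext i j
  simp [shiftMatrix_apply, one_apply, eq_comm]

variable [Fintype G]

lemma shiftMatrix_add (g h : G) :
    shiftMatrix R (g + h) = shiftMatrix R g * shiftMatrix R h := by
  ext i j
  simp only [shiftMatrix_apply, mul_apply, ite_mul, one_mul, zero_mul, Finset.sum_ite_eq',
    Finset.mem_univ, if_true, add_assoc]

lemma shiftMatrix_nsmul (n : ℕ) (g : G) : shiftMatrix R (n • g) = shiftMatrix R g ^ n := by
  induction n with
  | zero => rw [zero_nsmul, pow_zero, shiftMatrix_zero]
  | succ n ih => rw [succ_nsmul, shiftMatrix_add, ih, pow_succ]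

lemma diagonal_mul_shiftMatrix (d : G → R) (g : G) :
    diagonal d * shiftMatrix R g = of fun i j => if j = i + g then d i else 0 := by
  ext i j
  simp [diagonal_mul, shiftMatrix_apply]

lemma shiftMatrix_mul_diagonal (d : G → R) (g : G) :
    shiftMatrix R g * diagonal d = of fun i j => if j = i + g then d j else 0 := by
  ext i j
  simp [mul_diagonal, shiftMatrix_apply]

lemma eq_sum_diagonal_mul_shiftMatrix (a : Matrix G G R) :
    a = ∑ g, diagonal (fun i => a i (i + g)) * shiftMatrix R g := by
  ext i j
  have hj : ∀ g, j = i + g ↔ g = -i + j := fun g => by rw [eq_neg_add_iff_add_eq, eq_comm]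
  simp only [Matrix.sum_apply, diagonal_mul_shiftMatrix, of_apply, hj, Finset.sum_ite_eq',
    Finset.mem_univ, if_true, add_neg_cancel_left]

end ShiftMatrix

lemma IsPrimitiveRoot.pow_val_mul {R : Type*} [CommMonoid R] {ω : R} {p : ℕ} [NeZero p]
    (hω : IsPrimitiveRoot ω p) (g k : ZMod p) : ω ^ (g * k).val = (ω ^ k.val) ^ g.val := by
  have h := pow_mod_orderOf ω (k.val * g.val)
  rw [← hω.eq_orderOf] at h
  rw [ZMod.val_mul, mul_comm g.val, h, pow_mul]

section Characters

variable {X 𝕜 : Type*} [TopologicalSpace X] [CompactSpace X] [T2Space X] [RCLike 𝕜]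

lemma ContinuousMap.exists_algHom_eq_eval (ψ : C(X, 𝕜) →ₐ[𝕜] 𝕜) : ∃ x, ∀ f, ψ f = f x := by
  obtain ⟨x, hx⟩ := (WeakDual.CharacterSpace.homeoEval X 𝕜).surjective
    (WeakDual.CharacterSpace.equivAlgHom.symm ψ)
  exact ⟨x, fun f => (DFunLike.congr_fun hx f).symm⟩

lemma ContinuousMap.eq_of_forall_apply_eq {x y : X} (h : ∀ f : C(X, 𝕜), f x = f y) : x = y :=
  (WeakDual.CharacterSpace.homeoEval X 𝕜).injective (Subtype.ext (ContinuousLinearMap.ext h))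

end Characters

section TwistedMatrixAlgebra

variable {M : Type*} [TopologicalSpace M] {p : ℕ} {θ : M ≃ₜ M}

lemma iterate_val_natCast (hθ : ∀ x, (⇑θ)^[p] x = x) (m : ℕ) (x : M) :
    (⇑θ)^[(m : ZMod p).val] x = (⇑θ)^[m] x := by
  rw [ZMod.val_natCast]
  exact Function.IsPeriodicPt.iterate_mod_apply (hθ x) m

lemma dPred_shiftMatrix (g : ZMod p) : DPred p θ (shiftMatrix C(M, ℂ) g) := by
  intro i j x
  simp only [shiftMatrix_apply, add_right_comm _ (1 : ZMod p), add_left_inj]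
  split_ifs <;> rfl

namespace DPred

variable {a b : Matrix (ZMod p) (ZMod p) C(M, ℂ)}

lemma add (ha : DPred p θ a) (hb : DPred p θ b) : DPred p θ (a + b) := by
  intro i j x
  simp only [Matrix.add_apply, ContinuousMap.add_apply, ha i j x, hb i j x]

lemma apply_add_natCast (ha : DPred p θ a) (i j : ZMod p) (m : ℕ) (x : M) :
    a (i + m) (j + m) x = a i j ((⇑θ)^[m] x) := by
  induction m generalizing x with
  | zero => simp
  | succ m ih => rw [Nat.cast_succ, ← add_assoc, ← add_assoc, ha, ih, Function.iterate_succ_apply]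

variable [NeZero p]

lemma mul (ha : DPred p θ a) (hb : DPred p θ b) : DPred p θ (a * b) := by
  intro i j x
  simp only [mul_apply, ContinuousMap.coe_sum, Finset.sum_apply, ContinuousMap.mul_apply]
  refine (Fintype.sum_equiv (Equiv.addRight 1) _ _ fun l => ?_).symm
  rw [Equiv.coe_addRight, ha i l x, hb l j x]

end DPred

variable [NeZero p]

lemma iterate_val_add_one (hθ : ∀ x, (⇑θ)^[p] x = x) (i : ZMod p) (x : M) :
    (⇑θ)^[(i + 1).val] x = (⇑θ)^[i.val] (θ x) := by
  have h := iterate_val_natCast hθ (i.val + 1) x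
  rwa [Nat.cast_succ, ZMod.natCast_zmod_val, Function.iterate_succ_apply] at h

lemma dPred_algebraMap (c : ℂ) :
    DPred p θ (algebraMap ℂ (Matrix (ZMod p) (ZMod p) C(M, ℂ)) c) := by
  intro i j x
  simp only [algebraMap_eq_diagonal, diagonal_apply, add_left_inj]
  split_ifs <;> rfl

/-- The algebra `D(M,θ)`. -/
def twistedMatrixAlgebra (p : ℕ) [NeZero p] (θ : M ≃ₜ M) :
    Subalgebra ℂ (Matrix (ZMod p) (ZMod p) C(M, ℂ)) where
  carrier := {a | DPred p θ a}
  mul_mem' := DPred.mul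
  add_mem' := DPred.add
  algebraMap_mem' := dPred_algebraMap

noncomputable def diagEmbedding (p : ℕ) [NeZero p] (θ : M ≃ₜ M) :
    C(M, ℂ) →ₐ[ℂ] Matrix (ZMod p) (ZMod p) C(M, ℂ) :=
  (diagonalAlgHom ℂ).comp <| AlgHom.pi fun i =>
    (ContinuousMap.compStarAlgHom' ℂ ℂ ⟨(⇑θ)^[i.val], θ.continuous.iterate _⟩).toAlgHom

lemma diagEmbedding_apply (f : C(M, ℂ)) :
    diagEmbedding p θ f = diagonal fun i => f.comp ⟨(⇑θ)^[i.val], θ.continuous.iterate _⟩ :=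
  rfl

lemma dPred_diagEmbedding (hθ : ∀ x, (⇑θ)^[p] x = x) (f : C(M, ℂ)) :
    DPred p θ (diagEmbedding p θ f) := by
  intro i j x
  simp only [diagEmbedding_apply, diagonal_apply, add_left_inj]
  split_ifs
  · simp [iterate_val_add_one hθ]
  · rfl

lemma diagEmbedding_comp_mul_shiftMatrix (hθ : ∀ x, (⇑θ)^[p] x = x) (f : C(M, ℂ)) :
    diagEmbedding p θ (f.comp θ) * shiftMatrix _ 1 = shiftMatrix _ 1 * diagEmbedding p θ f := by
  ext i j x
  simp only [diagEmbedding_apply, diagonal_mul_shiftMatrix, shiftMatrix_mul_diagonal, of_apply]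
  split_ifs with h
  · simp [h, iterate_val_add_one hθ, ← Function.iterate_succ_apply, Function.iterate_succ_apply']
  · rfl

lemma DPred.eq_sum_diagEmbedding_mul_shiftMatrix_pow {a : Matrix (ZMod p) (ZMod p) C(M, ℂ)}
    (ha : DPred p θ a) : a = ∑ g, diagEmbedding p θ (a 0 g) * shiftMatrix _ 1 ^ g.val := by
  conv_lhs => rw [eq_sum_diagonal_mul_shiftMatrix a]
  refine Finset.sum_congr rfl fun g _ => ?_
  rw [← shiftMatrix_nsmul, nsmul_one, ZMod.natCast_zmod_val, diagEmbedding_apply]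
  congr
  funext i
  ext x
  simpa [add_comm] using ha.apply_add_natCast 0 g i.val x

theorem exists_fixedPoint_algHom_eq_sum [CompactSpace M] [T2Space M]
    (hθ : ∀ x, (⇑θ)^[p] x = x) {ω : ℂ} (hω : IsPrimitiveRoot ω p)
    (χ : twistedMatrixAlgebra p θ →ₐ[ℂ] ℂ) :
    ∃ (x₀ : M) (k : ZMod p), θ x₀ = x₀ ∧ ∀ a : twistedMatrixAlgebra p θ,
      χ a = ∑ j : ZMod p, ω ^ (j * k).val * (a : Matrix (ZMod p) (ZMod p) C(M, ℂ)) 0 j x₀ := by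
  let ι := (diagEmbedding p θ).codRestrict (twistedMatrixAlgebra p θ) (dPred_diagEmbedding hθ)
  let U : twistedMatrixAlgebra p θ := ⟨shiftMatrix _ 1, dPred_shiftMatrix 1⟩
  obtain ⟨x₀, hι⟩ : ∃ x₀ : M, ∀ f, χ (ι f) = f x₀ :=
    ContinuousMap.exists_algHom_eq_eval (χ.comp ι)
  have hUp : U ^ p = 1 := Subtype.ext (by simp [U, ← shiftMatrix_nsmul, shiftMatrix_zero])
  obtain ⟨k, hk⟩ : ∃ k : ZMod p, χ U = ω ^ k.val := by
    obtain ⟨i, hi, h⟩ := hω.eq_pow_of_pow_eq_one (ξ := χ U) (by rw [← map_pow, hUp, map_one])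
    exact ⟨i, by rw [ZMod.val_cast_of_lt hi, h]⟩
  have hU : χ U ≠ 0 := hk ▸ pow_ne_zero _ (hω.ne_zero (NeZero.ne p))
  refine ⟨x₀, k, ContinuousMap.eq_of_forall_apply_eq (𝕜 := ℂ) fun f => ?_, fun a => ?_⟩
  · have hcomm : ι (f.comp θ) * U = U * ι f :=
      Subtype.ext (diagEmbedding_comp_mul_shiftMatrix hθ f)
    have h := congrArg χ hcomm
    rw [map_mul, map_mul, hι, hι, mul_comm (χ U)] at h
    exact mul_right_cancel₀ hU h
  · have ha : a = ∑ g, ι (a.1 0 g) * U ^ g.val := Subtype.ext <| by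
      push_cast
      exact a.2.eq_sum_diagEmbedding_mul_shiftMatrix_pow
    conv_lhs => rw [ha]
    simp only [map_sum, map_mul, map_pow, hι, hk, hω.pow_val_mul]
    exact Finset.sum_congr rfl fun g _ => mul_comm _ _

end TwistedMatrixAlgebra

theorem stmt_9_general {M : Type*} [TopologicalSpace M] [CompactSpace M] [T2Space M]
    (p : ℕ) [NeZero p] (θ : M ≃ₜ M) (hθ : ∀ x, (⇑θ)^[p] x = x)
    (ω : ℂ) (hω : ω = Complex.exp (2 * Real.pi * Complex.I / p))
    (φ : Matrix (ZMod p) (ZMod p) C(M, ℂ) → ℂ)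
    (hadd : ∀ a b, DPred p θ a → DPred p θ b → φ (a + b) = φ a + φ b)
    (hmul : ∀ a b, DPred p θ a → DPred p θ b → φ (a * b) = φ a * φ b)
    (hsmul : ∀ (c : ℂ) a, DPred p θ a → φ (c • a) = c * φ a)
    (hone : φ 1 = 1) :
    ∃ (x₀ : M) (k : ZMod p), θ x₀ = x₀ ∧
      ∀ a, DPred p θ a → φ a = ∑ j : ZMod p, ω ^ (j * k).val * a 0 j x₀ := by
  let χ : twistedMatrixAlgebra p θ →ₐ[ℂ] ℂ := AlgHom.ofLinearMap
    { toFun := fun a => φ a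
      map_add' := fun a b => hadd a b a.2 b.2
      map_smul' := fun c a => hsmul c a a.2 }
    hone fun a b => hmul a b a.2 b.2
  obtain ⟨x₀, k, hx₀, hχ⟩ := exists_fixedPoint_algHom_eq_sum hθ
    (hω ▸ Complex.isPrimitiveRoot_exp p (NeZero.ne p)) χ
  exact ⟨x₀, k, hx₀, fun a ha => hχ ⟨a, ha⟩⟩

/-- assume `M_θ ≠ ∅`. Every continuous unital algebra homomorphism
`φ : D(M,θ) → ℂ` equals `σ_{x₀,k} : a ↦ ∑_j ω^{jk} a_{0,j}(x₀)` for some fixed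
point `x₀` of `θ` and some `k ∈ ℤ/pℤ`. -/
theorem stmt_9 {M : Type*} [TopologicalSpace M] [CompactSpace M] [T2Space M]
    (p : ℕ) (hp : p.Prime) [NeZero p] (θ : M ≃ₜ M) (hθ : ∀ x, (⇑θ)^[p] x = x)
    (hMθ : ∃ x : M, θ x = x)
    (ω : ℂ) (hω : ω = Complex.exp (2 * Real.pi * Complex.I / p))
    (φ : Matrix (ZMod p) (ZMod p) C(M, ℂ) → ℂ)
    (hcont : ContinuousOn φ {a | DPred p θ a})
    (hadd : ∀ a b, DPred p θ a → DPred p θ b → φ (a + b) = φ a + φ b)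
    (hmul : ∀ a b, DPred p θ a → DPred p θ b → φ (a * b) = φ a * φ b)
    (hsmul : ∀ (c : ℂ) a, DPred p θ a → φ (c • a) = c * φ a)
    (hone : φ 1 = 1) :
    ∃ (x₀ : M) (k : ZMod p), θ x₀ = x₀ ∧
      ∀ a, DPred p θ a → φ a = ∑ j : ZMod p, ω ^ (j * k).val * a 0 j x₀ :=
  stmt_9_general p θ hθ ω hω φ hadd hmul hsmul hone
end

section
/- Assume that M₀ = M \ M_θ is dense in M. If a ∈ D(M,θ) satisfies a·c = 0 for every c ∈ D(M₀,θ), then a = 0. (Equivalently, D(M₀,θ) is an essential ideal of D(M,θ).) -/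
/-!
Fix `i, j` and a point `x` with `θ x ≠ x`. Then `y = θ^j x` is not fixed either, so complete
regularity gives `g ∈ C(M, ℂ)` vanishing on the closed set `M_θ` with `g y = 1`. The diagonal
matrix `c = diag(g, g ∘ θ, …, g ∘ θ^(p-1))` lies in `D(M₀, θ)` because `θ^p = id`, and
`(a * c)_ij = a_ij · (g ∘ θ^j)`, so `0 = (a * c)_ij x = a_ij x`. Hence `a_ij` vanishes on the
dense set `M₀`, and by continuity everywhere.
-/

open Matrix

open Function Set

theorem Function.iterate_zmod_val_add_one {α : Type*} {f : α → α} {p : ℕ} [NeZero p]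
    (hf : ∀ x, f^[p] x = x) (k : ZMod p) : f^[(k + 1).val] = f^[k.val] ∘ f := by
  funext x
  have hval : (k + 1).val = (k.val + 1) % p := by
    rw [← ZMod.val_natCast, Nat.cast_add, ZMod.natCast_zmod_val, Nat.cast_one]
  rw [hval, IsPeriodicPt.iterate_mod_apply (hf x), iterate_succ]

theorem CompletelyRegularSpace.exists_continuousMap_eqOn_zero_eq_one {X : Type*}
    [TopologicalSpace X] [CompletelyRegularSpace X] {K : Set X} (hK : IsClosed K) {y : X}
    (hy : y ∉ K) : ∃ g : C(X, ℂ), EqOn g 0 K ∧ g y = 1 := by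
  obtain ⟨f, hf, hfy, hfK⟩ := CompletelyRegularSpace.completely_regular y K hK hy
  refine ⟨⟨fun z => 1 - ((f z : ℝ) : ℂ), by fun_prop⟩, fun z hz => ?_, ?_⟩
  · simp [hfK hz]
  · simp [hfy]

section

variable {M : Type*} [TopologicalSpace M]

noncomputable def orbitDiagonal (p : ℕ) (θ : M ≃ₜ M) (g : C(M, ℂ)) :
    Matrix (ZMod p) (ZMod p) C(M, ℂ) :=
  diagonal fun k => g.comp ⟨θ^[k.val], θ.continuous.iterate _⟩

theorem dPred_orbitDiagonal {p : ℕ} [NeZero p] {θ : M ≃ₜ M} (hθ : ∀ x, (⇑θ)^[p] x = x)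
    (g : C(M, ℂ)) :
    DPred p θ (orbitDiagonal p θ g) := by
  intro k l x
  by_cases hkl : k = l
  · subst hkl
    simp [orbitDiagonal, iterate_zmod_val_add_one hθ]
  · have hkl' : k + 1 ≠ l + 1 := fun h => hkl (add_right_cancel h)
    simp [orbitDiagonal, diagonal_apply_ne _ hkl, diagonal_apply_ne _ hkl']

theorem orbitDiagonal_apply_of_isFixedPt {p : ℕ} {θ : M ≃ₜ M} {g : C(M, ℂ)}
    (hg : ∀ x, θ x = x → g x = 0) (k l : ZMod p) {x : M} (hx : θ x = x) :
    orbitDiagonal p θ g k l x = 0 := by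
  by_cases hkl : k = l
  · subst hkl
    simp [orbitDiagonal, iterate_fixed hx, hg x hx]
  · simp [orbitDiagonal, diagonal_apply_ne _ hkl]

theorem mul_orbitDiagonal_apply {p : ℕ} [NeZero p] (a : Matrix (ZMod p) (ZMod p) C(M, ℂ))
    (θ : M ≃ₜ M) (g : C(M, ℂ)) (i j : ZMod p) (x : M) :
    (a * orbitDiagonal p θ g) i j x = a i j x * g ((⇑θ)^[j.val] x) := by
  simp [orbitDiagonal, mul_diagonal]

theorem apply_eq_zero_of_forall_mul_eq_zero [T2Space M] [CompletelyRegularSpace M]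
    {p : ℕ} [NeZero p] {θ : M ≃ₜ M} (hθ : ∀ x, (⇑θ)^[p] x = x)
    {a : Matrix (ZMod p) (ZMod p) C(M, ℂ)}
    (h : ∀ c : Matrix (ZMod p) (ZMod p) C(M, ℂ), DPred p θ c →
      (∀ i j : ZMod p, ∀ x : M, θ x = x → c i j x = 0) → a * c = 0)
    (i j : ZMod p) {x : M} (hx : θ x ≠ x) : a i j x = 0 := by
  have hy : θ ((⇑θ)^[j.val] x) ≠ (⇑θ)^[j.val] x := fun hfix =>
    hx <| θ.injective.iterate j.val <| by rwa [← iterate_succ_apply, iterate_succ_apply']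
  obtain ⟨g, hgK, hgy⟩ := CompletelyRegularSpace.exists_continuousMap_eqOn_zero_eq_one
    (isClosed_eq θ.continuous continuous_id) hy
  have hac := h _ (dPred_orbitDiagonal hθ g)
    (orbitDiagonal_apply_of_isFixedPt fun z hz => hgK hz)
  simpa [mul_orbitDiagonal_apply, hgy] using congr($hac i j x)

end

theorem stmt_11_general {M : Type*} [TopologicalSpace M] [CompactSpace M] [T2Space M]
    (p : ℕ) [NeZero p] (θ : M ≃ₜ M) (hθ : ∀ x, (⇑θ)^[p] x = x)
    (hdense : Dense {x : M | θ x ≠ x})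
    (a : Matrix (ZMod p) (ZMod p) C(M, ℂ))
    (h : ∀ c : Matrix (ZMod p) (ZMod p) C(M, ℂ), DPred p θ c →
      (∀ i j : ZMod p, ∀ x : M, θ x = x → c i j x = 0) → a * c = 0) :
    a = 0 := by
  ext i j x
  have hzero : EqOn (a i j) 0 {x | θ x ≠ x} := fun _ hx =>
    apply_eq_zero_of_forall_mul_eq_zero hθ h i j hx
  exact congrFun ((a i j).continuous.ext_on hdense continuous_zero hzero) x

/-- if `M₀ = M \ M_θ` is dense in `M` and `a ∈ D(M,θ)` satisfies
`a·c = 0` for every `c ∈ D(M₀,θ)` (i.e. every `c ∈ D(M,θ)` vanishing entrywise on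
`M_θ`), then `a = 0`; so `D(M₀,θ)` is an essential ideal of `D(M,θ)`. -/
theorem stmt_11 {M : Type*} [TopologicalSpace M] [CompactSpace M] [T2Space M]
    (p : ℕ) (hp : p.Prime) [NeZero p] (θ : M ≃ₜ M) (hθ : ∀ x, (⇑θ)^[p] x = x)
    (hdense : Dense {x : M | θ x ≠ x})
    (a : Matrix (ZMod p) (ZMod p) C(M, ℂ)) (ha : DPred p θ a)
    (h : ∀ c : Matrix (ZMod p) (ZMod p) C(M, ℂ), DPred p θ c →
      (∀ i j : ZMod p, ∀ x : M, θ x = x → c i j x = 0) → a * c = 0) :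
    a = 0 :=
  stmt_11_general p θ hθ hdense a h
end
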